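/- If G is a triangle-free graph having a maximum open packing that induces a disjoint union of copies of K_2 (a perfect matching on itself), and H is a bipartite graph without isolated vertices of order at least two, then γ_tR(G × H) ≥ ρ_o(G)·γ_tR(H). -/

import Mathlib

open Finset

/-- A total Roman dominating function: labels in {0,1,2}, every 0-labeled vertex has a
2-labeled neighbor, and positive-labeled vertices induce a subgraph with no isolated vertex. -/
def IsTRDF {V : Type*} (G : SimpleGraph V) (f : V → ℕ) : Prop :=
  (∀ v, f v ≤ 2) ∧
  (∀ v, f v = 0 → ∃ u, G.Adj v u ∧ f u = 2) ∧
  (∀ v, 0 < f v → ∃ u, G.Adj v u ∧ 0 < f u)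

/-- The total Roman domination number. -/
noncomputable def trdn {V : Type*} (G : SimpleGraph V) [Fintype V] : ℕ :=
  sInf {w | ∃ f : V → ℕ, IsTRDF G f ∧ ∑ v, f v = w}

/-- A total dominating set. -/
def IsTotalDomSet {V : Type*} (G : SimpleGraph V) (D : Set V) : Prop :=
  ∀ v, ∃ u ∈ D, G.Adj v u

/-- The total domination number. -/
noncomputable def tdn {V : Type*} (G : SimpleGraph V) [Fintype V] : ℕ :=
  sInf {n | ∃ D : Finset V, IsTotalDomSet G ↑D ∧ D.card = n}

/-- A packing: pairwise disjoint closed neighborhoods. -/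
def IsPacking {V : Type*} (G : SimpleGraph V) (S : Set V) : Prop :=
  ∀ u ∈ S, ∀ v ∈ S, u ≠ v →
    Disjoint (insert u (G.neighborSet u)) (insert v (G.neighborSet v))

/-- The packing number. -/
noncomputable def packingNumber {V : Type*} (G : SimpleGraph V) [Fintype V] : ℕ :=
  sSup {n | ∃ S : Finset V, IsPacking G ↑S ∧ S.card = n}

/-- An open packing: pairwise disjoint open neighborhoods. -/
def IsOpenPacking {V : Type*} (G : SimpleGraph V) (S : Set V) : Prop :=
  ∀ u ∈ S, ∀ v ∈ S, u ≠ v → Disjoint (G.neighborSet u) (G.neighborSet v)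

/-- The open packing number. -/
noncomputable def openPackingNumber {V : Type*} (G : SimpleGraph V) [Fintype V] : ℕ :=
  sSup {n | ∃ S : Finset V, IsOpenPacking G ↑S ∧ S.card = n}

/-- The direct (tensor) product of two simple graphs. -/
def dirProd {V W : Type*} (G : SimpleGraph V) (H : SimpleGraph W) : SimpleGraph (V × W) where
  Adj p q := G.Adj p.1 q.1 ∧ H.Adj p.2 q.2
  symm := ⟨fun p q h => ⟨h.1.symm, h.2.symm⟩⟩
  loopless := ⟨fun p h => G.loopless.irrefl p.1 h.1⟩

/-- A graph with no isolated vertices. -/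
def NoIsolated {V : Type*} (G : SimpleGraph V) : Prop := ∀ v, ∃ u, G.Adj v u

/-!
Fix a TRDF `f` of `G × H`, a 2-colouring of `H` and an edge `uv` of `G`. Projecting `f` onto `H`
by summing over `N(u)` on one colour class and over `N(v)` on the other, and capping at `2`, gives a
TRDF of `H`: a zero at `y` on `u`'s side forces `f(v, y) = 0`, and the `2`-labelled neighbour of
`(v, y)` lies over a neighbour of `y` on `v`'s side. Since the maximum open packing `S` is matched
onto itself, the projections along the edges `u(p u)`, `u ∈ S`, use every neighbourhood `N(u)` once
on each colour class, and these neighbourhoods are pairwise disjoint, so the `|S|` projections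
together weigh at most `w(f)`.
-/

section TotalRoman

variable {V W : Type*} {G : SimpleGraph V} {H : SimpleGraph W}

theorem IsTRDF.exists_adj_pos {f : V → ℕ} (hf : IsTRDF G f) (v : V) :
    ∃ u, G.Adj v u ∧ 0 < f u := by
  rcases Nat.eq_zero_or_pos (f v) with h | h
  · obtain ⟨u, huv, hu⟩ := hf.2.1 v h
    exact ⟨u, huv, by omega⟩
  · exact hf.2.2 v h

theorem IsTRDF.dirProd_comp_snd {g : W → ℕ} (hG : NoIsolated G) (hg : IsTRDF H g) :
    IsTRDF (dirProd G H) (g ∘ Prod.snd) := by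
  refine ⟨fun q => hg.1 q.2, fun q hq => ?_, fun q hq => ?_⟩
  · obtain ⟨x, hx⟩ := hG q.1
    obtain ⟨y, hy, hy2⟩ := hg.2.1 q.2 hq
    exact ⟨(x, y), ⟨hx, hy⟩, hy2⟩
  · obtain ⟨x, hx⟩ := hG q.1
    obtain ⟨y, hy, hypos⟩ := hg.2.2 q.2 hq
    exact ⟨(x, y), ⟨hx, hy⟩, hypos⟩

section trdn

variable [Fintype V]

theorem trdn_le {f : V → ℕ} (hf : IsTRDF G f) : trdn G ≤ ∑ v, f v :=
  Nat.sInf_le ⟨f, hf, rfl⟩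

theorem le_trdn {n : ℕ} (hne : ∃ f, IsTRDF G f) (h : ∀ f, IsTRDF G f → n ≤ ∑ v, f v) :
    n ≤ trdn G := by
  obtain ⟨f, hf⟩ := hne
  refine le_csInf ⟨_, f, hf, rfl⟩ ?_
  rintro _ ⟨g, hg, rfl⟩
  exact h g hg

theorem trdn_eq_zero (h : ∀ f, ¬IsTRDF G f) : trdn G = 0 :=
  Nat.sInf_eq_zero.mpr <| Or.inr <| Set.eq_empty_of_forall_notMem fun _ ⟨f, hf, _⟩ => h f hf

end trdn

theorem IsOpenPacking.pairwiseDisjoint_neighborFinset [Fintype V] [DecidableRel G.Adj]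
    {S : Finset V} (hS : IsOpenPacking G ↑S) :
    (S : Set V).PairwiseDisjoint fun u => G.neighborFinset u := by
  intro a ha b hb hab
  simpa only [Function.onFun, ← Finset.disjoint_coe, SimpleGraph.coe_neighborFinset]
    using hS a ha b hb hab

theorem exists_involution_of_existsUnique_adj {S : Finset V}
    (h : ∀ u ∈ S, ∃! v, v ∈ S ∧ G.Adj u v) :
    ∃ p : V → V, ∀ u ∈ S, p u ∈ S ∧ G.Adj u (p u) ∧ p (p u) = u := by
  choose! p hp using fun u hu => (h u hu).exists
  refine ⟨p, fun u hu => ⟨(hp u hu).1, (hp u hu).2, ?_⟩⟩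
  exact (h (p u) (hp u hu).1).unique (hp (p u) (hp u hu).1) ⟨hu, (hp u hu).2.symm⟩

section projection

variable [Fintype V] [DecidableRel G.Adj] (G)

def neighborSum (f : V × W → ℕ) (u : V) (y : W) : ℕ :=
  ∑ x ∈ G.neighborFinset u, f (x, y)

def pairProjection (f : V × W → ℕ) (u v : V) (c : H.Coloring Bool) (y : W) : ℕ :=
  min 2 (neighborSum G f (cond (c y) u v) y)

variable {G} {f : V × W → ℕ}

theorem le_neighborSum {u x : V} (h : G.Adj u x) (y : W) : f (x, y) ≤ neighborSum G f u y :=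
  single_le_sum (f := fun x => f (x, y)) (fun _ _ => Nat.zero_le _)
    ((G.mem_neighborFinset u x).mpr h)

theorem IsTRDF.exists_adj_neighborSum_pos (hf : IsTRDF (dirProd G H) f) (u : V) (y : W) :
    ∃ y', H.Adj y y' ∧ 0 < neighborSum G f u y' := by
  obtain ⟨q, ⟨hu, hy⟩, hq⟩ := hf.exists_adj_pos (u, y)
  exact ⟨q.2, hy, hq.trans_le (le_neighborSum hu q.2)⟩

theorem IsTRDF.exists_adj_two_le_neighborSum (hf : IsTRDF (dirProd G H) f) {u v : V}
    (huv : G.Adj u v) {y : W} (hy : neighborSum G f u y = 0) :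
    ∃ y', H.Adj y y' ∧ 2 ≤ neighborSum G f v y' := by
  have hvy : f (v, y) = 0 := Nat.eq_zero_of_le_zero (hy ▸ le_neighborSum huv y)
  obtain ⟨q, ⟨hv, hy'⟩, hq⟩ := hf.2.1 (v, y) hvy
  exact ⟨q.2, hy', hq ▸ le_neighborSum hv q.2⟩

theorem pairProjection_of_adj (c : H.Coloring Bool) (u v : V) {y y' : W} (h : H.Adj y y') :
    pairProjection G f u v c y' = min 2 (neighborSum G f (cond (c y) v u) y') := by
  rw [pairProjection, Bool.eq_not.mpr (c.valid h).symm]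
  cases c y <;> rfl

theorem isTRDF_pairProjection (hf : IsTRDF (dirProd G H) f) {u v : V} (huv : G.Adj u v)
    (c : H.Coloring Bool) : IsTRDF H (pairProjection G f u v c) := by
  have hcond (b : Bool) : G.Adj (cond b u v) (cond b v u) := by
    cases b
    exacts [huv.symm, huv]
  refine ⟨fun y => min_le_left _ _, fun y hy => ?_, fun y _ => ?_⟩
  · have hy0 : neighborSum G f (cond (c y) u v) y = 0 := by
      simpa [pairProjection] using hy
    obtain ⟨y', hyy', h2⟩ := hf.exists_adj_two_le_neighborSum (hcond (c y)) hy0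
    exact ⟨y', hyy', by rw [pairProjection_of_adj c u v hyy']; omega⟩
  · obtain ⟨y', hyy', hpos⟩ := hf.exists_adj_neighborSum_pos (cond (c y) v u) y
    exact ⟨y', hyy', by rw [pairProjection_of_adj c u v hyy']; omega⟩

variable [Fintype W]

theorem sum_pairProjection_le (u v : V) (c : H.Coloring Bool) :
    ∑ y, pairProjection G f u v c y ≤
      ∑ y with c y, neighborSum G f u y + ∑ y with ¬c y, neighborSum G f v y := by
  rw [← sum_filter_add_sum_filter_not univ (fun y => c y = true)]
  gcongr with y hy y hy <;>
    simp only [mem_filter] at hy <;> simp [pairProjection, hy]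

theorem sum_neighborSum_le {S : Finset V} (hS : IsOpenPacking G ↑S) :
    ∑ u ∈ S, ∑ y, neighborSum G f u y ≤ ∑ q, f q := by
  classical
  calc ∑ u ∈ S, ∑ y, neighborSum G f u y
      = ∑ x ∈ S.biUnion fun u => G.neighborFinset u, ∑ y, f (x, y) := by
        rw [sum_biUnion hS.pairwiseDisjoint_neighborFinset]
        exact sum_congr rfl fun u _ => sum_comm
    _ ≤ ∑ x, ∑ y, f (x, y) := sum_le_sum_of_subset (subset_univ _)
    _ = ∑ q, f q := (Fintype.sum_prod_type f).symm

theorem card_mul_trdn_le_of_isTRDF (hf : IsTRDF (dirProd G H) f) {S : Finset V}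
    (hS : IsOpenPacking G ↑S) {p : V → V} (hp : ∀ u ∈ S, p u ∈ S ∧ G.Adj u (p u) ∧ p (p u) = u)
    (c : H.Coloring Bool) : #S * trdn H ≤ ∑ q, f q :=
  calc #S * trdn H = ∑ u ∈ S, trdn H := by rw [sum_const, smul_eq_mul]
    _ ≤ ∑ u ∈ S, ∑ y, pairProjection G f u (p u) c y :=
        sum_le_sum fun u hu => trdn_le (isTRDF_pairProjection hf (hp u hu).2.1 c)
    _ ≤ ∑ u ∈ S, (∑ y with c y, neighborSum G f u y + ∑ y with ¬c y, neighborSum G f (p u) y) :=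
        sum_le_sum fun u _ => sum_pairProjection_le u (p u) c
    _ = ∑ u ∈ S, (∑ y with c y, neighborSum G f u y + ∑ y with ¬c y, neighborSum G f u y) := by
        rw [sum_add_distrib, sum_add_distrib]
        congr 1
        exact sum_nbij' p p (fun u hu => (hp u hu).1) (fun u hu => (hp u hu).1)
          (fun u hu => (hp u hu).2.2) (fun u hu => (hp u hu).2.2) fun _ _ => rfl
    _ = ∑ u ∈ S, ∑ y, neighborSum G f u y := by
        simp only [sum_filter_add_sum_filter_not]
    _ ≤ ∑ q, f q := sum_neighborSum_le hS

end projection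

end TotalRoman

theorem stmt_11_general {V W : Type*} [Fintype V] [Fintype W]
    (G : SimpleGraph V) (H : SimpleGraph W)
    (hG : NoIsolated G)
    (S : Finset V) (hS : IsOpenPacking G ↑S) (hScard : S.card = openPackingNumber G)
    (hmatch : ∀ u ∈ S, ∃! v, v ∈ S ∧ G.Adj u v)
    (hHbip : H.Colorable 2) :
    trdn (dirProd G H) ≥ openPackingNumber G * trdn H := by
  classical
  obtain ⟨p, hp⟩ := exists_involution_of_existsUnique_adj hmatch
  have c : H.Coloring Bool := hHbip.toColoring (by simp)
  rw [ge_iff_le, ← hScard]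
  by_cases hH : ∃ g, IsTRDF H g
  · obtain ⟨g, hg⟩ := hH
    exact le_trdn ⟨_, hg.dirProd_comp_snd hG⟩ fun f hf => card_mul_trdn_le_of_isTRDF hf hS hp c
  · simp [trdn_eq_zero (not_exists.mp hH)]

theorem stmt_11 {V W : Type*} [Fintype V] [Fintype W]
    (G : SimpleGraph V) (H : SimpleGraph W)
    (hGfree : G.CliqueFree 3) (hG : NoIsolated G)
    (S : Finset V) (hS : IsOpenPacking G ↑S) (hScard : S.card = openPackingNumber G)
    (hmatch : ∀ u ∈ S, ∃! v, v ∈ S ∧ G.Adj u v)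
    (hHbip : H.Colorable 2) (hW : 2 ≤ Fintype.card W) (hH : NoIsolated H) :
    trdn (dirProd G H) ≥ openPackingNumber G * trdn H :=
  stmt_11_general G H hG S hS hScard hmatch hHbip
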